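/- Let G be a graph whose Gallai–Edmonds decomposition is (D₁, …, D_r; A; C). If A is non-empty, then the number r of components of D is strictly greater than |A|. -/

import Mathlib

attribute [local instance] Classical.propDecidable

variable {V : Type} [Fintype V] [DecidableEq V]

/-- A matching in a simple graph `G`: a finite set of edges of `G`, pairwise vertex-disjoint. -/
def IsGMatching (G : SimpleGraph V) (M : Finset (Sym2 V)) : Prop :=
  (∀ e ∈ M, e ∈ G.edgeSet) ∧ ∀ e ∈ M, ∀ f ∈ M, e ≠ f → ∀ v, v ∈ e → v ∉ f

/-- The matching number `ν(G)` of a simple graph. -/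
noncomputable def gnu (G : SimpleGraph V) : ℕ :=
  ((Finset.univ : Finset (Sym2 V)).powerset.filter fun M => IsGMatching G M).sup Finset.card

/-- The graph `G - v`: delete the vertex `v` (i.e. all edges incident to it). -/
def delV (G : SimpleGraph V) (v : V) : SimpleGraph V where
  Adj x y := G.Adj x y ∧ x ≠ v ∧ y ≠ v
  symm := ⟨fun _ _ ⟨h, hx, hy⟩ => ⟨h.symm, hy, hx⟩⟩
  loopless := ⟨fun x h => G.loopless.irrefl x h.1⟩

/-- The Gallai–Edmonds set `D(G) = {v : ν(G - v) = ν(G)}`. -/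
def Dset (G : SimpleGraph V) : Set V := {v | gnu (delV G v) = gnu G}

/-- The Gallai–Edmonds set `A(G) = N_G(D(G))`. -/
def Aset (G : SimpleGraph V) : Set V := {w | w ∉ Dset G ∧ ∃ d ∈ Dset G, G.Adj w d}

/-- The Gallai–Edmonds set `C(G) = V \ (D(G) ∪ A(G))`. -/
def Cset (G : SimpleGraph V) : Set V := (Dset G ∪ Aset G)ᶜ

/-- Reachability inside the induced subgraph `G[S]` (same component of `G[S]`). -/
def reachOn (G : SimpleGraph V) (S : Set V) : V → V → Prop :=
  Relation.ReflTransGen fun a b => G.Adj a b ∧ a ∈ S ∧ b ∈ S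

/-!
Delete the vertices of `A` one at a time. A vertex `a ∈ A(G)` is covered by every maximum
matching, so `ν(G - a) = ν(G) - 1`, and switching matchings along alternating paths shows
`D(G - a) = D(G) ∪ {a}`. Hence `H = G - A` has `ν(H) = ν(G) - |A|`, `D(H) = D ∪ A` and
`H[D] = G[D]`. A maximum matching of `H` exposes `|V| - 2ν(H) ≥ 2|A| + 1` vertices
(`|V| > 2ν(G)` because `D ≠ ∅`), all of them in `D(H) = D ∪ A`. By Gallai's lemma, applied in
`H` to `D ⊆ D(H)`, a maximum matching exposes at most one vertex in each component of `H[D]`.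
So `2|A| + 1 ≤ r + |A|`.
-/

section Matching

variable {V : Type} {G : SimpleGraph V} {M N : Finset (Sym2 V)} {u v w y z a b : V}

def coveredBy (M : Finset (Sym2 V)) : Set V := {v | ∃ e ∈ M, v ∈ e}

lemma mem_coveredBy_iff_exists_mk : u ∈ coveredBy M ↔ ∃ w, s(u, w) ∈ M := by
  constructor
  · rintro ⟨e, he, hu⟩
    obtain ⟨w, rfl⟩ := Sym2.mem_iff_exists.1 hu
    exact ⟨w, he⟩
  · rintro ⟨w, hw⟩
    exact ⟨_, hw, Sym2.mem_mk_left u w⟩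

lemma coveredBy_mono (h : M ⊆ N) : coveredBy M ⊆ coveredBy N :=
  fun _ ⟨e, he, hv⟩ => ⟨e, h he, hv⟩

lemma coveredBy_insert_mk (M : Finset (Sym2 V)) (a b : V) :
    coveredBy (insert s(a, b) M) = insert a (insert b (coveredBy M)) := by
  ext v
  simp only [coveredBy, Finset.mem_insert, Set.mem_ofPred_eq, Set.mem_insert_iff]
  aesop

lemma card_insert_mk_of_notMem_coveredBy (ha : a ∉ coveredBy M) :
    (insert s(a, b) M).card = M.card + 1 :=
  Finset.card_insert_of_notMem fun h => ha ⟨_, h, Sym2.mem_mk_left a b⟩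

namespace IsGMatching

lemma subset (hM : IsGMatching G M) (h : N ⊆ M) : IsGMatching G N :=
  ⟨fun e he => hM.1 e (h he), fun e he f hf => hM.2 e (h he) f (h hf)⟩

lemma adj (hM : IsGMatching G M) (h : s(a, b) ∈ M) : G.Adj a b :=
  hM.1 _ h

lemma coveredBy_erase_mk (hM : IsGMatching G M) (h : s(a, b) ∈ M) :
    coveredBy (M.erase s(a, b)) = coveredBy M \ {a, b} := by
  ext v
  constructor
  · rintro ⟨e, he, hv⟩
    obtain ⟨hne, he⟩ := Finset.mem_erase.1 he
    refine ⟨⟨e, he, hv⟩, fun hab => hM.2 _ h e he hne.symm v ?_ hv⟩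
    rcases hab with rfl | rfl
    exacts [Sym2.mem_mk_left _ _, Sym2.mem_mk_right _ _]
  · rintro ⟨⟨e, he, hv⟩, hab⟩
    refine ⟨e, Finset.mem_erase.2 ⟨?_, he⟩, hv⟩
    rintro rfl
    exact hab (Sym2.mem_iff.1 hv)

lemma insert_mk (hM : IsGMatching G M) (hab : G.Adj a b) (ha : a ∉ coveredBy M)
    (hb : b ∉ coveredBy M) : IsGMatching G (insert s(a, b) M) := by
  have hfree : ∀ f ∈ M, ∀ v ∈ s(a, b), v ∉ f := by
    intro f hf v hv hvf
    rcases Sym2.mem_iff.1 hv with rfl | rfl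
    exacts [ha ⟨f, hf, hvf⟩, hb ⟨f, hf, hvf⟩]
  refine ⟨?_, ?_⟩
  · simp only [Finset.mem_insert, forall_eq_or_imp]
    exact ⟨hab, hM.1⟩
  · intro e he f hf hne v hve hvf
    rcases Finset.mem_insert.1 he with rfl | he <;> rcases Finset.mem_insert.1 hf with rfl | hf
    exacts [hne rfl, hfree f hf v hve hvf, hfree e he v hvf hve, hM.2 e he f hf hne v hve hvf]

lemma ncard_coveredBy [Finite V] (hM : IsGMatching G M) : (coveredBy M).ncard = 2 * M.card := by
  induction M using Finset.induction_on with
  | empty => simp [coveredBy]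
  | @insert e M he ih =>
    induction e using Sym2.ind with
    | _ a b =>
    have hM' := hM.subset (Finset.subset_insert _ M)
    have hfree : ∀ v ∈ s(a, b), v ∉ coveredBy M := fun v hv ⟨f, hf, hvf⟩ =>
      hM.2 _ (Finset.mem_insert_self _ M) f (Finset.mem_insert_of_mem hf)
        (fun h => he (h ▸ hf)) v hv hvf
    have hab : a ≠ b := (hM.adj (Finset.mem_insert_self _ M)).ne
    rw [coveredBy_insert_mk, Set.ncard_insert_of_notMem, Set.ncard_insert_of_notMem
      (hfree b (Sym2.mem_mk_right a b)), ih hM', Finset.card_insert_of_notMem he]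
    · ring
    · rintro (rfl | ha)
      exacts [hab rfl, hfree a (Sym2.mem_mk_left a b) ha]

end IsGMatching

lemma mem_edgeSet_delV {e : Sym2 V} : e ∈ (delV G v).edgeSet ↔ e ∈ G.edgeSet ∧ v ∉ e := by
  induction e using Sym2.ind with
  | _ x y =>
    simp only [SimpleGraph.mem_edgeSet, Sym2.mem_iff, delV]
    grind

lemma isGMatching_delV_iff : IsGMatching (delV G v) M ↔ IsGMatching G M ∧ v ∉ coveredBy M := by
  constructor
  · intro hM
    refine ⟨⟨fun e he => (mem_edgeSet_delV.1 (hM.1 e he)).1, hM.2⟩, ?_⟩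
    rintro ⟨e, he, hve⟩
    exact (mem_edgeSet_delV.1 (hM.1 e he)).2 hve
  · rintro ⟨hM, hv⟩
    exact ⟨fun e he => mem_edgeSet_delV.2 ⟨hM.1 e he, fun hve => hv ⟨e, he, hve⟩⟩, hM.2⟩

lemma IsGMatching.erase_isGMatching_delV (hM : IsGMatching G M) (h : s(v, w) ∈ M) :
    IsGMatching (delV G v) (M.erase s(v, w)) :=
  isGMatching_delV_iff.2 ⟨hM.subset (M.erase_subset _), by simp [hM.coveredBy_erase_mk h]⟩

-- The outcome of switching `M` and `N` along an alternating path from `u` to `w` whose first edge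
-- lies in `N`. For a path of even length only the new `N` is recorded; for one of odd length the
-- new `M` has one edge more.
def EvenSwap (G : SimpleGraph V) (M N : Finset (Sym2 V)) (u w : V) : Prop :=
  w ∈ coveredBy M ∧ ∃ N', IsGMatching G N' ∧ N'.card = N.card ∧
    coveredBy N' ⊆ insert w (coveredBy N) \ {u}

def OddSwap (G : SimpleGraph V) (M N : Finset (Sym2 V)) (u w : V) : Prop :=
  w ≠ u ∧ w ∈ coveredBy N ∧ ∃ M' N', IsGMatching G M' ∧ IsGMatching G N' ∧
    M'.card = M.card + 1 ∧ N'.card + 1 = N.card ∧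
    coveredBy M' ⊆ insert u (insert w (coveredBy M)) ∧ coveredBy N' ⊆ coveredBy N \ {u, w}

lemma EvenSwap.cons (hM : IsGMatching G M) (hN : IsGMatching G N) (hu : u ∉ coveredBy M)
    (huy : s(u, y) ∈ N) (hyz : s(y, z) ∈ M) (hzN : z ∈ coveredBy N)
    (h : EvenSwap G (M.erase s(y, z)) (N.erase s(u, y)) z w) : EvenSwap G M N u w := by
  obtain ⟨hwM, N', hN', hcard, hcov⟩ := h
  rw [hM.coveredBy_erase_mk hyz] at hwM
  rw [hN.coveredBy_erase_mk huy] at hcov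
  have huz : u ≠ z := fun h => hu (h ▸ ⟨_, hyz, Sym2.mem_mk_right y z⟩)
  have hwu : w ≠ u := fun h => hu (h ▸ hwM.1)
  have hyN' : y ∉ coveredBy N' := fun h => by
    obtain ⟨h | h, -⟩ := hcov h
    exacts [hwM.2 (Or.inl h.symm), h.2 (Or.inr rfl)]
  refine ⟨hwM.1, _, hN'.insert_mk (hM.adj hyz) hyN' fun h => (hcov h).2 rfl, ?_, ?_⟩
  · rw [card_insert_mk_of_notMem_coveredBy hyN', hcard, Finset.card_erase_add_one huy]
  · rw [coveredBy_insert_mk, Set.insert_subset_iff, Set.insert_subset_iff]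
    refine ⟨⟨Or.inr ⟨_, huy, Sym2.mem_mk_right u y⟩, (hN.adj huy).ne.symm⟩,
      ⟨Or.inr hzN, huz.symm⟩, fun x hx => ?_⟩
    obtain ⟨hx | hx, -⟩ := hcov hx
    · subst hx
      exact ⟨Or.inl rfl, hwu⟩
    · exact ⟨Or.inr hx.1, fun hxu => hx.2 (Or.inl hxu)⟩

lemma OddSwap.cons (hM : IsGMatching G M) (hN : IsGMatching G N) (hu : u ∉ coveredBy M)
    (huy : s(u, y) ∈ N) (hyz : s(y, z) ∈ M) (hzN : z ∈ coveredBy N)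
    (h : OddSwap G (M.erase s(y, z)) (N.erase s(u, y)) z w) : OddSwap G M N u w := by
  obtain ⟨hwz, hwN, M', N', hM', hN', hcardM, hcardN, hcovM, hcovN⟩ := h
  rw [hN.coveredBy_erase_mk huy] at hwN hcovN
  rw [hM.coveredBy_erase_mk hyz] at hcovM
  have huz : u ≠ z := fun h => hu (h ▸ ⟨_, hyz, Sym2.mem_mk_right y z⟩)
  have hwu : w ≠ u := fun h => hwN.2 (Or.inl h)
  have hwy : w ≠ y := fun h => hwN.2 (Or.inr h)
  have huM' : u ∉ coveredBy M' := fun h => by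
    obtain (h | h | h) := hcovM h
    exacts [huz h, hwu h.symm, hu h.1]
  have hyM' : y ∉ coveredBy M' := fun h => by
    obtain (h | h | h) := hcovM h
    exacts [(hM.adj hyz).ne h, hwy h.symm, h.2 (Or.inl rfl)]
  have hyN' : y ∉ coveredBy N' := fun h => (hcovN h).1.2 (Or.inr rfl)
  have hzN' : z ∉ coveredBy N' := fun h => (hcovN h).2 (Or.inl rfl)
  refine ⟨hwu, hwN.1, _, _, hM'.insert_mk (hN.adj huy) huM' hyM',
    hN'.insert_mk (hM.adj hyz) hyN' hzN', ?_, ?_, ?_, ?_⟩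
  · rw [card_insert_mk_of_notMem_coveredBy huM', hcardM, Finset.card_erase_add_one hyz]
  · rw [card_insert_mk_of_notMem_coveredBy hyN', hcardN, Finset.card_erase_add_one huy]
  · rw [coveredBy_insert_mk]
    refine Set.insert_subset_insert (Set.insert_subset (Or.inr ⟨_, hyz, Sym2.mem_mk_left y z⟩)
      fun x hx => ?_)
    obtain hx | hx | hx := hcovM hx
    · subst hx
      exact Or.inr ⟨_, hyz, Sym2.mem_mk_right _ _⟩
    exacts [Or.inl hx, Or.inr hx.1]
  · rw [coveredBy_insert_mk, Set.insert_subset_iff, Set.insert_subset_iff]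
    refine ⟨⟨⟨_, huy, Sym2.mem_mk_right u y⟩, ?_⟩, ⟨hzN, ?_⟩, fun x hx => ?_⟩
    · rintro (h | h)
      exacts [(hN.adj huy).ne h.symm, hwy h.symm]
    · rintro (h | h)
      exacts [huz h.symm, hwz h.symm]
    · obtain ⟨⟨hx, hxuy⟩, hxzw⟩ := hcovN hx
      exact ⟨hx, by rintro (h | h); exacts [hxuy (Or.inl h), hxzw (Or.inr h)]⟩

theorem exists_evenSwap_or_oddSwap (hM : IsGMatching G M) (hN : IsGMatching G N)
    (hu : u ∉ coveredBy M) (huN : u ∈ coveredBy N) :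
    ∃ w, EvenSwap G M N u w ∨ OddSwap G M N u w := by
  induction N using Finset.strongInduction generalizing M u with
  | H N ih =>
  obtain ⟨y, huy⟩ := mem_coveredBy_iff_exists_mk.1 huN
  have hN₁ := hN.subset (N.erase_subset s(u, y))
  have hcovN₁ := hN.coveredBy_erase_mk huy
  by_cases hyM : y ∈ coveredBy M
  swap
  · exact ⟨y, Or.inr ⟨(hN.adj huy).ne.symm, ⟨_, huy, Sym2.mem_mk_right u y⟩, _, _,
      hM.insert_mk (hN.adj huy) hu hyM, hN₁, card_insert_mk_of_notMem_coveredBy hu,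
      Finset.card_erase_add_one huy, (coveredBy_insert_mk M u y).le, hcovN₁.le⟩⟩
  obtain ⟨z, hyz⟩ := mem_coveredBy_iff_exists_mk.1 hyM
  have hzM : z ∈ coveredBy M := ⟨_, hyz, Sym2.mem_mk_right y z⟩
  have hyN₁ : y ∉ coveredBy (N.erase s(u, y)) := by simp [hcovN₁]
  by_cases hzN : z ∈ coveredBy N
  swap
  · have hzN₁ : z ∉ coveredBy (N.erase s(u, y)) :=
      fun h => hzN (coveredBy_mono (N.erase_subset _) h)
    refine ⟨z, Or.inl ⟨hzM, _, hN₁.insert_mk (hM.adj hyz) hyN₁ hzN₁, ?_, ?_⟩⟩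
    · rw [card_insert_mk_of_notMem_coveredBy hyN₁, Finset.card_erase_add_one huy]
    · rw [coveredBy_insert_mk, hcovN₁, Set.insert_subset_iff, Set.insert_subset_iff]
      exact ⟨⟨Or.inr ⟨_, huy, Sym2.mem_mk_right u y⟩, (hN.adj huy).ne.symm⟩,
        ⟨Or.inl rfl, fun h => hu (h ▸ hzM)⟩, fun x hx => ⟨Or.inr hx.1, fun h => hx.2 (Or.inl h)⟩⟩
  have hzN₁ : z ∈ coveredBy (N.erase s(u, y)) := by
    have huz : u ≠ z := fun h => hu (h ▸ hzM)
    rw [hcovN₁]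
    simp [hzN, huz.symm, (hM.adj hyz).ne.symm]
  have hzM₁ : z ∉ coveredBy (M.erase s(y, z)) := by simp [hM.coveredBy_erase_mk hyz]
  obtain ⟨w, hw⟩ := ih _ (N.erase_ssubset huy) (hM.subset (M.erase_subset _)) hN₁ hzM₁ hzN₁
  exact ⟨w, hw.imp (EvenSwap.cons hM hN hu huy hyz hzN) (OddSwap.cons hM hN hu huy hyz hzN)⟩

end Matching

section DeleteVertices

variable {V : Type} {G : SimpleGraph V}

def delSet (G : SimpleGraph V) (S : Set V) : SimpleGraph V where
  Adj x y := G.Adj x y ∧ x ∉ S ∧ y ∉ S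
  symm := ⟨fun _ _ ⟨h, hx, hy⟩ => ⟨h.symm, hy, hx⟩⟩
  loopless := ⟨fun x h => G.loopless.irrefl x h.1⟩

lemma delSet_empty (G : SimpleGraph V) : delSet G ∅ = G := by
  ext x y
  simp [delSet]

lemma delSet_insert (G : SimpleGraph V) (S : Set V) (a : V) :
    delSet G (insert a S) = delV (delSet G S) a := by
  ext x y
  simp only [delSet, delV, Set.mem_insert_iff]
  tauto

lemma induce_delSet_of_disjoint {S T : Set V} (h : Disjoint S T) :
    (delSet G S).induce T = G.induce T := by
  ext x y
  simp only [SimpleGraph.induce_adj, delSet, and_iff_left_iff_imp]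
  exact fun _ => ⟨Set.disjoint_right.1 h x.2, Set.disjoint_right.1 h y.2⟩

end DeleteVertices

section MatchingNumber

variable {V : Type} [Fintype V] {G : SimpleGraph V} {M : Finset (Sym2 V)} {v a b : V}

lemma IsGMatching.card_le_gnu (hM : IsGMatching G M) : M.card ≤ gnu G :=
  Finset.le_sup (Finset.mem_filter.2 ⟨Finset.mem_powerset.2 (Finset.subset_univ M), hM⟩)

lemma exists_isGMatching_card_eq_gnu (G : SimpleGraph V) :
    ∃ M, IsGMatching G M ∧ M.card = gnu G := by
  have hempty : IsGMatching G ∅ := by simp [IsGMatching]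
  obtain ⟨M, hM, hMc⟩ := Finset.exists_mem_eq_sup _
    ⟨∅, Finset.mem_filter.2 ⟨Finset.empty_mem_powerset _, hempty⟩⟩ Finset.card
  exact ⟨M, (Finset.mem_filter.1 hM).2, hMc.symm⟩

lemma IsGMatching.not_adj_of_card_eq_gnu (hM : IsGMatching G M) (hMc : M.card = gnu G)
    (ha : a ∉ coveredBy M) (hb : b ∉ coveredBy M) : ¬G.Adj a b := fun hab => by
  have := (hM.insert_mk hab ha hb).card_le_gnu
  rw [card_insert_mk_of_notMem_coveredBy ha] at this
  omega

lemma gnu_delV_le : gnu (delV G v) ≤ gnu G := by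
  obtain ⟨M, hM, hMc⟩ := exists_isGMatching_card_eq_gnu (delV G v)
  exact hMc ▸ (isGMatching_delV_iff.1 hM).1.card_le_gnu

lemma mem_Dset_iff :
    v ∈ Dset G ↔ ∃ M, IsGMatching G M ∧ M.card = gnu G ∧ v ∉ coveredBy M := by
  constructor
  · intro hv
    obtain ⟨M, hM, hMc⟩ := exists_isGMatching_card_eq_gnu (delV G v)
    obtain ⟨hM, hvM⟩ := isGMatching_delV_iff.1 hM
    exact ⟨M, hM, hMc.trans hv, hvM⟩
  · rintro ⟨M, hM, hMc, hvM⟩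
    have := (isGMatching_delV_iff.2 ⟨hM, hvM⟩).card_le_gnu
    exact le_antisymm gnu_delV_le (by omega)

lemma gnu_delV_add_one_of_notMem_Dset (hv : v ∉ Dset G) : gnu (delV G v) + 1 = gnu G := by
  obtain ⟨M, hM, hMc⟩ := exists_isGMatching_card_eq_gnu G
  have hvM : v ∈ coveredBy M := by
    by_contra hvM
    exact hv (mem_Dset_iff.2 ⟨M, hM, hMc, hvM⟩)
  obtain ⟨w, hvw⟩ := mem_coveredBy_iff_exists_mk.1 hvM
  have := (hM.erase_isGMatching_delV hvw).card_le_gnu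
  have := Finset.card_erase_add_one hvw
  have : gnu (delV G v) ≠ gnu G := hv
  have := gnu_delV_le (G := G) (v := v)
  omega

lemma two_mul_gnu_lt_card_of_mem_Dset (hv : v ∈ Dset G) : 2 * gnu G < Fintype.card V := by
  obtain ⟨M, hM, hMc, hvM⟩ := mem_Dset_iff.1 hv
  have hlt : (coveredBy M).ncard < (Set.univ : Set V).ncard :=
    Set.ncard_lt_ncard (Set.ssubset_univ_iff.2 fun h => hvM (h ▸ Set.mem_univ v))
  rwa [hM.ncard_coveredBy, hMc, Set.ncard_univ, Nat.card_eq_fintype_card] at hlt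

lemma eq_of_reachable_of_notMem_coveredBy {S : Set V} (hS : S ⊆ Dset G)
    (hM : IsGMatching G M) (hMc : M.card = gnu G) {u w : S} (huw : (G.induce S).Reachable u w)
    (hu : ↑u ∉ coveredBy M) (hw : ↑w ∉ coveredBy M) : u = w := by
  obtain ⟨p⟩ := huw
  induction p generalizing M with
  | nil => rfl
  | @cons u t w hut q ih =>
    by_contra huw
    rw [SimpleGraph.induce_adj] at hut
    by_cases ht : ↑t ∈ coveredBy M
    swap
    · exact hM.not_adj_of_card_eq_gnu hMc hu ht hut
    obtain ⟨N, hN, hNc, htN⟩ := mem_Dset_iff.1 (hS t.2)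
    -- Switching along the alternating path from `t` yields a maximum matching that exposes `t`
    -- and every vertex exposed by `M` except possibly `z`.
    obtain ⟨z, ⟨-, M', hM', hM'c, hcov⟩ | ⟨-, -, N', -, hN', -, hN'c, -⟩⟩ :=
      exists_evenSwap_or_oddSwap hN hM htN ht
    · have htM' : ↑t ∉ coveredBy M' := fun h => (hcov h).2 rfl
      by_cases hzu : z = u
      · have hwM' : ↑w ∉ coveredBy M' := by
          intro h
          obtain (h | h) := (hcov h).1
          exacts [huw (Subtype.ext (hzu ▸ h).symm), hw h]
        exact hw (ih hM' (hM'c.trans hMc) htM' hwM' ▸ ht)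
      · have huM' : ↑u ∉ coveredBy M' := by
          intro h
          obtain (h | h) := (hcov h).1
          exacts [hzu h.symm, hu h]
        exact hM'.not_adj_of_card_eq_gnu (hM'c.trans hMc) huM' htM' hut
    · have := hN'.card_le_gnu
      omega

lemma ncard_compl_coveredBy_inter_le {S : Set V} (hS : S ⊆ Dset G) (hM : IsGMatching G M)
    (hMc : M.card = gnu G) :
    ((coveredBy M)ᶜ ∩ S).ncard ≤ Nat.card (G.induce S).ConnectedComponent := by
  let f (v : ↥((coveredBy M)ᶜ ∩ S)) : (G.induce S).ConnectedComponent :=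
    (G.induce S).connectedComponentMk ⟨v, v.2.2⟩
  have hf : f.Injective := fun v v' h => Subtype.ext <| congrArg (Subtype.val : S → V) <|
    eq_of_reachable_of_notMem_coveredBy hS hM hMc (SimpleGraph.ConnectedComponent.exact h)
      v.2.1 v'.2.1
  simpa only [Nat.card_coe_set_eq] using Nat.card_le_card_of_injective f hf

lemma mem_Dset_delV_of_mem_Dset (ha : a ∉ Dset G) (hv : v ∈ Dset G) : v ∈ Dset (delV G a) := by
  obtain ⟨M, hM, hMc, hvM⟩ := mem_Dset_iff.1 hv
  have hgnu := gnu_delV_add_one_of_notMem_Dset ha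
  have haM : a ∈ coveredBy M := by
    by_contra haM
    have := (isGMatching_delV_iff.2 ⟨hM, haM⟩).card_le_gnu
    omega
  obtain ⟨b, hab⟩ := mem_coveredBy_iff_exists_mk.1 haM
  refine mem_Dset_iff.2 ⟨_, hM.erase_isGMatching_delV hab, ?_,
    fun h => hvM (coveredBy_mono (M.erase_subset _) h)⟩
  have := Finset.card_erase_add_one hab
  omega

lemma mem_Dset_of_mem_Dset_delV (ha : a ∈ Aset G) (hv : v ∈ Dset (delV G a)) (hva : v ≠ a) :
    v ∈ Dset G := by
  obtain ⟨haD, d, hdD, had⟩ := ha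
  rcases eq_or_ne v d with rfl | hvd
  · exact hdD
  have hgnu := gnu_delV_add_one_of_notMem_Dset haD
  obtain ⟨M, hM, hMc, hvM⟩ := mem_Dset_iff.1 hv
  obtain ⟨hMG, haM⟩ := isGMatching_delV_iff.1 hM
  obtain ⟨N, hN, hNc, hdN⟩ := mem_Dset_iff.1 hdD
  by_cases hvN : v ∈ coveredBy N
  swap
  · exact mem_Dset_iff.2 ⟨N, hN, hNc, hvN⟩
  obtain ⟨w, ⟨-, N', hN', hN'c, hcov⟩ | ⟨-, -, M', N', hM', hN', hM'c, hN'c, hcovM, hcovN⟩⟩ :=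
    exists_evenSwap_or_oddSwap hMG hN hvM hvN
  · exact mem_Dset_iff.2 ⟨N', hN', hN'c.trans hNc, fun h => (hcov h).2 rfl⟩
  -- `M'` is too large to be a matching of `G - a`, so `w = a`, and then `N'` misses `a` and `d`.
  have hwa : w = a := by
    by_contra hwa
    have haM' : a ∉ coveredBy M' := fun h => by
      obtain (h | h | h) := hcovM h
      exacts [hva h.symm, hwa h.symm, haM h]
    have := (isGMatching_delV_iff.2 ⟨hM', haM'⟩).card_le_gnu
    omega
  subst hwa
  have haN' : w ∉ coveredBy N' := fun h => (hcovN h).2 (Or.inr rfl)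
  have hdN' : d ∉ coveredBy N' := fun h => hdN (hcovN h).1
  refine mem_Dset_iff.2 ⟨_, hN'.insert_mk had haN' hdN', ?_, ?_⟩
  · rw [card_insert_mk_of_notMem_coveredBy haN']
    omega
  · rw [coveredBy_insert_mk]
    rintro (h | h | h)
    exacts [hva h, hvd h, (hcovN h).2 (Or.inl rfl)]

lemma Dset_delV_of_mem_Aset (ha : a ∈ Aset G) : Dset (delV G a) = insert a (Dset G) := by
  ext v
  constructor
  · intro hv
    rcases eq_or_ne v a with rfl | hva
    exacts [Set.mem_insert v _, Or.inr (mem_Dset_of_mem_Dset_delV ha hv hva)]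
  · rintro (rfl | hv)
    · obtain ⟨M, hM, hMc⟩ := exists_isGMatching_card_eq_gnu (delV G v)
      exact mem_Dset_iff.2 ⟨M, hM, hMc, (isGMatching_delV_iff.1 hM).2⟩
    · exact mem_Dset_delV_of_mem_Dset ha.1 hv

lemma gnu_delSet_add_ncard_and_Dset_delSet {S : Set V} (hSA : S ⊆ Aset G) :
    gnu (delSet G S) + S.ncard = gnu G ∧ Dset (delSet G S) = Dset G ∪ S := by
  induction S, S.toFinite using Set.Finite.induction_on with
  | empty => simp [delSet_empty]
  | @insert a S haS _ ih =>
    obtain ⟨hgnu, hD⟩ := ih ((Set.subset_insert a S).trans hSA)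
    obtain ⟨haD, d, hdD, had⟩ := hSA (Set.mem_insert a S)
    have hdS : d ∉ S := fun hdS => (hSA (Or.inr hdS)).1 hdD
    have ha : a ∈ Aset (delSet G S) := by
      rw [Aset, hD]
      exact ⟨fun h => h.elim haD haS, d, Or.inl hdD, had, haS, hdS⟩
    have := gnu_delV_add_one_of_notMem_Dset ha.1
    rw [delSet_insert, Set.ncard_insert_of_notMem haS, Dset_delV_of_mem_Aset ha, hD]
    exact ⟨by omega, (Set.union_insert ..).symm⟩

end MatchingNumber

/-- If `A(G)` is non-empty, then the number of connected components of `G[D]` is strictly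
greater than `|A(G)|`. -/
theorem GE_components_gt_A {V : Type} [Fintype V] [DecidableEq V]
    (G : SimpleGraph V) (hA : (Aset G).Nonempty) :
    (Aset G).ncard < Nat.card ((G.induce (Dset G)).ConnectedComponent) := by
  obtain ⟨-, -, d, hd, -⟩ := hA
  have hcard := two_mul_gnu_lt_card_of_mem_Dset hd
  obtain ⟨hgnu, hD⟩ := gnu_delSet_add_ncard_and_Dset_delSet (subset_refl (Aset G))
  obtain ⟨M, hM, hMc⟩ := exists_isGMatching_card_eq_gnu (delSet G (Aset G))
  have hexposed : (coveredBy M)ᶜ ⊆ ((coveredBy M)ᶜ ∩ Dset G) ∪ Aset G := fun v hv => by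
    have : v ∈ Dset (delSet G (Aset G)) := mem_Dset_iff.2 ⟨M, hM, hMc, hv⟩
    rw [hD] at this
    exact this.imp (⟨hv, ·⟩) id
  have hDcomp := ncard_compl_coveredBy_inter_le (hD ▸ Set.subset_union_left) hM hMc
  rw [induce_delSet_of_disjoint (Set.disjoint_left.2 fun _ ha => ha.1)] at hDcomp
  have hexp := Set.ncard_add_ncard_compl (coveredBy M)
  rw [hM.ncard_coveredBy, Nat.card_eq_fintype_card] at hexp
  have := (Set.ncard_le_ncard hexposed).trans (Set.ncard_union_le _ _)
  omega
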